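/- arXiv:1510.03575 — 2 statements merged into one kernel-verified Lean document; each statement's English description precedes it below -/
import Mathlib

section
/- Suppose ρ > 1/2, and for b > 0 let r(b) denote the unique minimizer of a ↦ c(a;b) over [0,∞). Then b^e < b^e/(4(1−ρ)²), r is monotone increasing on the interval (0, b^e/(4(1−ρ)²)) (follow-the-crowd behaviour), and r is monotone decreasing on the interval (b^e/(4(1−ρ)²), b^e/(1−ρ)²) (avoid-the-crowd behaviour). -/
/-- Expected waiting time `W(a; b)` of a tagged customer bidding `a` when all
other customers bid `b`, in the homogeneous accumulating-priority M/G/1 queue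
with utilization `ρ` and mean residual service time `W0`. -/
noncomputable def waitW (ρ W0 b a : ℝ) : ℝ :=
  if a ≤ b then W0 / (1 - ρ) * b / ((1 - ρ) * b + ρ * a)
  else W0 / (1 - ρ) * ((1 - ρ) * a + ρ * b) / a

/-- Cost `c(a;b) = C·W(a;b) + a` of a tagged customer bidding `a` against crowd bid `b`. -/
noncomputable def costC (ρ W0 C b a : ℝ) : ℝ := C * waitW ρ W0 b a + a

/-- The equilibrium bid `b^e = CρW₀/(1-ρ)`. -/
noncomputable def eqBid (ρ W0 C : ℝ) : ℝ := C * ρ * W0 / (1 - ρ)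

/-!
Write `s = √(b^e b)`. Both branches of the cost are affine images of `x ↦ s²/x + x`, which
decreases on `(0, s]` and increases on `[s, ∞)`: for `a ≥ b` the cost is `CW₀ + s²/a + a`,
and for `a ≤ b` it is `ρ⁻¹ (s²/D + D - (1-ρ)b)` with `D = (1-ρ)b + ρa`. Hence the best
response is `√(b^e b)` when `b ≤ b^e`, and the bid `(√(b^e b) - (1-ρ)b)/ρ` making `D = s`
when `b^e ≤ b ≤ b^e/(1-ρ)²`. As a function of `√b` the latter is a concave parabola with
vertex at `b = b^e/(4(1-ρ)²)`, which lies beyond `b^e` exactly when `ρ > 1/2`.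
-/
open Set

section Parabola

variable {c e k : ℝ}

lemma monotoneOn_mul_sub_mul_sq (hc : 0 < c) :
    MonotoneOn (fun t => e * t - c * t ^ 2) (Iic (e / (2 * c))) := by
  intro u hu v hv huv
  have hu' : 2 * c * u ≤ e := (le_div_iff₀' (by positivity)).1 hu
  have hv' : 2 * c * v ≤ e := (le_div_iff₀' (by positivity)).1 hv
  nlinarith [mul_nonneg (sub_nonneg.2 huv) (by linarith : 0 ≤ e - c * (u + v))]

lemma antitoneOn_mul_sub_mul_sq (hc : 0 < c) :
    AntitoneOn (fun t => e * t - c * t ^ 2) (Ici (e / (2 * c))) := by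
  intro u hu v hv huv
  have hu' : e ≤ 2 * c * u := (div_le_iff₀' (by positivity)).1 hu
  have hv' : e ≤ 2 * c * v := (div_le_iff₀' (by positivity)).1 hv
  nlinarith [mul_nonneg (sub_nonneg.2 huv) (by linarith : 0 ≤ c * (u + v) - e)]

lemma sqrt_mul_sub_mul_eq (hk : 0 ≤ k) {b : ℝ} (hb : 0 ≤ b) :
    √(k * b) - c * b = √k * √b - c * √b ^ 2 := by
  rw [Real.sqrt_mul hk, Real.sq_sqrt hb]

lemma sqrt_div_four_mul_sq (hc : 0 < c) :
    √(k / (4 * c ^ 2)) = √k / (2 * c) := by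
  rw [Real.sqrt_div' _ (by positivity), show 4 * c ^ 2 = (2 * c) ^ 2 by ring,
    Real.sqrt_sq (by positivity)]

lemma monotoneOn_sqrt_mul_sub_mul (hc : 0 < c) (hk : 0 ≤ k) :
    MonotoneOn (fun b => √(k * b) - c * b) (Icc 0 (k / (4 * c ^ 2))) := by
  refine ((monotoneOn_mul_sub_mul_sq (e := √k) hc).comp
    (Real.sqrt_monotone.monotoneOn _) ?_).congr ?_
  · intro b hb
    rw [mem_Iic, ← sqrt_div_four_mul_sq hc]
    exact Real.sqrt_le_sqrt hb.2
  · intro b hb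
    exact (sqrt_mul_sub_mul_eq hk hb.1).symm

lemma antitoneOn_sqrt_mul_sub_mul (hc : 0 < c) (hk : 0 ≤ k) :
    AntitoneOn (fun b => √(k * b) - c * b) (Ici (k / (4 * c ^ 2))) := by
  refine ((antitoneOn_mul_sub_mul_sq (e := √k) hc).comp_MonotoneOn
    (Real.sqrt_monotone.monotoneOn _) ?_).congr ?_
  · intro b hb
    rw [mem_Ici, ← sqrt_div_four_mul_sq hc]
    exact Real.sqrt_le_sqrt hb
  · intro b hb
    exact (sqrt_mul_sub_mul_eq hk ((by positivity : 0 ≤ k / (4 * c ^ 2)).trans hb)).symm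

end Parabola

theorem MonotoneOn.div_const {f : ℝ → ℝ} {s : Set ℝ} (hf : MonotoneOn f s) {c : ℝ}
    (hc : 0 ≤ c) :
    MonotoneOn (fun x => f x / c) s :=
  fun _ hx _ hy hxy => div_le_div_of_nonneg_right (hf hx hy hxy) hc

theorem AntitoneOn.div_const {f : ℝ → ℝ} {s : Set ℝ} (hf : AntitoneOn f s) {c : ℝ}
    (hc : 0 ≤ c) :
    AntitoneOn (fun x => f x / c) s :=
  fun _ hx _ hy hxy => div_le_div_of_nonneg_right (hf hx hy hxy) hc

lemma two_mul_le_sq_div_add (s : ℝ) {x : ℝ} (hx : 0 < x) : 2 * s ≤ s ^ 2 / x + x := by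
  rw [div_add' _ _ _ hx.ne', le_div_iff₀ hx]
  nlinarith [sq_nonneg (s - x)]

lemma antitoneOn_sq_div_add (s : ℝ) : AntitoneOn (fun x => s ^ 2 / x + x) (Ioc 0 s) := by
  intro x hx y hy hxy
  dsimp only
  rw [div_add' _ _ _ hx.1.ne', div_add' _ _ _ hy.1.ne', div_le_div_iff₀ hy.1 hx.1]
  have hxys : x * y ≤ s * s := mul_le_mul hx.2 hy.2 hy.1.le (hx.1.le.trans hx.2)
  nlinarith [mul_nonneg (sub_nonneg.2 hxy) (sub_nonneg.2 hxys)]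

lemma monotoneOn_sq_div_add {s : ℝ} (hs : 0 < s) :
    MonotoneOn (fun x => s ^ 2 / x + x) (Ici s) := by
  intro x hx y hy hxy
  have hx0 : 0 < x := hs.trans_le hx
  have hy0 : 0 < y := hx0.trans_le hxy
  dsimp only
  rw [div_add' _ _ _ hx0.ne', div_add' _ _ _ hy0.ne', div_le_div_iff₀ hx0 hy0]
  have hxys : s * s ≤ x * y := mul_le_mul hx hy hs.le hx0.le
  nlinarith [mul_nonneg (sub_nonneg.2 hxy) (sub_nonneg.2 hxys)]

section Cost

variable {ρ W0 C b a : ℝ}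

lemma mul_costC_of_le (hab : a ≤ b) :
    ρ * costC ρ W0 C b a = eqBid ρ W0 C * b / ((1 - ρ) * b + ρ * a)
      + ((1 - ρ) * b + ρ * a) - (1 - ρ) * b := by
  rw [costC, waitW, if_pos hab, eqBid]
  ring

lemma costC_of_le (hρ1 : ρ ≠ 1) (hb : 0 < b) (hba : b ≤ a) :
    costC ρ W0 C b a = C * W0 + eqBid ρ W0 C * b / a + a := by
  have h1ρ : 1 - ρ ≠ 0 := sub_ne_zero.2 hρ1.symm
  have ha : a ≠ 0 := (hb.trans_le hba).ne'
  rcases hba.eq_or_lt with rfl | hlt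
  · rw [costC, waitW, if_pos le_rfl, eqBid]
    field_simp
    ring
  · rw [costC, waitW, if_neg hlt.not_ge, eqBid]
    field_simp

end Cost

lemma mul_le_sqrt_mul {c k b : ℝ} (hc : 0 < c) (hb : 0 ≤ b) (h : b ≤ k / c ^ 2) :
    c * b ≤ √(k * b) := by
  have hk : c ^ 2 * b ≤ k := by rwa [le_div_iff₀' (by positivity)] at h
  have hkb : 0 ≤ k * b := mul_nonneg ((by positivity : 0 ≤ c ^ 2 * b).trans hk) hb
  exact (Real.le_sqrt (by positivity) hkb).2 (by nlinarith)

section BestResponse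

variable {ρ W0 C b : ℝ}

lemma isMinOn_costC_sqrt (hρ0 : 0 < ρ) (hρ1 : ρ < 1) (hb : 0 < b) (hbe : b ≤ eqBid ρ W0 C) :
    IsMinOn (costC ρ W0 C b) (Ici 0) √(eqBid ρ W0 C * b) := by
  set s := √(eqBid ρ W0 C * b)
  have hs2 : s ^ 2 = eqBid ρ W0 C * b := Real.sq_sqrt (by nlinarith)
  have hbs : b ≤ s := (Real.le_sqrt hb.le (by nlinarith)).2 (by nlinarith)
  have hs : s ^ 2 / s = s := by field_simp [(hb.trans_le hbs).ne']
  have hright : ∀ a, b ≤ a → costC ρ W0 C b s ≤ costC ρ W0 C b a := by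
    intro a hba
    rw [costC_of_le hρ1.ne hb hbs, costC_of_le hρ1.ne hb hba, ← hs2, hs]
    linarith [two_mul_le_sq_div_add s (hb.trans_le hba)]
  rw [isMinOn_iff]
  intro a ha
  rcases le_total b a with hba | hab
  · exact hright a hba
  · refine (hright b le_rfl).trans (le_of_mul_le_mul_left ?_ hρ0)
    have hD : 0 < (1 - ρ) * b + ρ * a := by nlinarith [mem_Ici.1 ha]
    have hDb : (1 - ρ) * b + ρ * b = b := by ring
    rw [mul_costC_of_le hab, mul_costC_of_le le_rfl, hDb, ← hs2]
    have hDb' : (1 - ρ) * b + ρ * a ≤ b := by nlinarith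
    linarith [antitoneOn_sq_div_add s ⟨hD, hDb'.trans hbs⟩ ⟨hb, hbs⟩ hDb']

lemma isMinOn_costC_sqrt_sub (hρ0 : 0 < ρ) (hρ1 : ρ < 1) (hbe0 : 0 < eqBid ρ W0 C)
    (hbe : eqBid ρ W0 C ≤ b) :
    IsMinOn (costC ρ W0 C b) (Ici 0) ((√(eqBid ρ W0 C * b) - (1 - ρ) * b) / ρ) := by
  set s := √(eqBid ρ W0 C * b)
  have hb : 0 < b := hbe0.trans_le hbe
  have hs2 : s ^ 2 = eqBid ρ W0 C * b := Real.sq_sqrt (by positivity)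
  have hs0 : 0 < s := Real.sqrt_pos.2 (by positivity)
  have hsb : s ≤ b := (Real.sqrt_le_left hb.le).2 (by nlinarith)
  have hs : s ^ 2 / s = s := by field_simp
  have hDq : (1 - ρ) * b + ρ * ((s - (1 - ρ) * b) / ρ) = s := by field_simp; ring
  have hqb : (s - (1 - ρ) * b) / ρ ≤ b := by rw [div_le_iff₀ hρ0]; linarith
  have hleft : ∀ a, 0 ≤ a → a ≤ b →
      costC ρ W0 C b ((s - (1 - ρ) * b) / ρ) ≤ costC ρ W0 C b a := by
    intro a ha hab
    refine le_of_mul_le_mul_left ?_ hρ0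
    have hD : 0 < (1 - ρ) * b + ρ * a := by nlinarith
    rw [mul_costC_of_le hqb, mul_costC_of_le hab, hDq, ← hs2, hs]
    linarith [two_mul_le_sq_div_add s hD]
  rw [isMinOn_iff]
  intro a ha
  rcases le_total a b with hab | hba
  · exact hleft a ha hab
  · refine (hleft b hb.le le_rfl).trans ?_
    rw [costC_of_le hρ1.ne hb le_rfl, costC_of_le hρ1.ne hb hba, ← hs2]
    linarith [monotoneOn_sq_div_add hs0 hsb (hsb.trans hba) hba]

end BestResponse

/-- If `ρ > 1/2` and `r b` is, for each `b > 0`, the unique minimizer of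
`a ↦ c(a;b)` over `[0,∞)`, then `b^e < b^e/(4(1-ρ)²)`, `r` is monotone
increasing (FTC) on `(0, b^e/(4(1-ρ)²))` and monotone decreasing (ATC) on
`(b^e/(4(1-ρ)²), b^e/(1-ρ)²)`. -/
theorem best_response_FTC_ATC_high_rho (ρ W0 C : ℝ) (hρ0 : 0 < ρ) (hρ1 : ρ < 1)
    (hW0 : 0 < W0) (hC : 0 < C) (hρhalf : 1 / 2 < ρ) (r : ℝ → ℝ)
    (hr : ∀ b : ℝ, 0 < b →
      0 ≤ r b ∧ (∀ a : ℝ, 0 ≤ a → costC ρ W0 C b (r b) ≤ costC ρ W0 C b a) ∧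
      (∀ a : ℝ, 0 ≤ a → (∀ a' : ℝ, 0 ≤ a' → costC ρ W0 C b a ≤ costC ρ W0 C b a') →
        a = r b)) :
    eqBid ρ W0 C < eqBid ρ W0 C / (4 * (1 - ρ) ^ 2) ∧
    MonotoneOn r (Set.Ioo 0 (eqBid ρ W0 C / (4 * (1 - ρ) ^ 2))) ∧
    AntitoneOn r (Set.Ioo (eqBid ρ W0 C / (4 * (1 - ρ) ^ 2))
      (eqBid ρ W0 C / (1 - ρ) ^ 2)) := by
  have h1ρ : 0 < 1 - ρ := by linarith
  have hbe : 0 < eqBid ρ W0 C := div_pos (by positivity) h1ρ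
  set be := eqBid ρ W0 C
  have hr_eq : ∀ b q, 0 < b → 0 ≤ q → IsMinOn (costC ρ W0 C b) (Ici 0) q → r b = q :=
    fun b q hb hq hmin => ((hr b hb).2.2 q hq (isMinOn_iff.1 hmin)).symm
  have hr₁ : EqOn r (fun b => √(be * b)) (Ioc 0 be) := fun b hb =>
    hr_eq b _ hb.1 (Real.sqrt_nonneg _) (isMinOn_costC_sqrt hρ0 hρ1 hb.1 hb.2)
  have hr₂ : EqOn r (fun b => (√(be * b) - (1 - ρ) * b) / ρ) (Icc be (be / (1 - ρ) ^ 2)) :=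
    fun b hb => hr_eq b _ (hbe.trans_le hb.1)
      (div_nonneg (sub_nonneg.2 (mul_le_sqrt_mul h1ρ (hbe.le.trans hb.1) hb.2)) hρ0.le)
      (isMinOn_costC_sqrt_sub hρ0 hρ1 hbe hb.1)
  have h4 : 4 * (1 - ρ) ^ 2 < 1 := by nlinarith
  have hbeB : be < be / (4 * (1 - ρ) ^ 2) := by rw [lt_div_iff₀ (by positivity)]; nlinarith
  have hBU : be / (4 * (1 - ρ) ^ 2) ≤ be / (1 - ρ) ^ 2 :=
    div_le_div_of_nonneg_left hbe.le (by positivity) (by nlinarith)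
  refine ⟨hbeB, ?_, ?_⟩
  · have hmono₁ : MonotoneOn r (Ioc 0 be) :=
      ((Real.sqrt_monotone.comp (monotone_mul_left_of_nonneg hbe.le)).monotoneOn _).congr
        hr₁.symm
    have hmono₂ : MonotoneOn r (Icc be (be / (4 * (1 - ρ) ^ 2))) :=
      (((monotoneOn_sqrt_mul_sub_mul h1ρ hbe.le).mono (Icc_subset_Icc hbe.le le_rfl)).div_const
        hρ0.le).congr (hr₂.mono (Icc_subset_Icc le_rfl hBU)).symm
    refine (hmono₁.union_right hmono₂ (isGreatest_Ioc hbe) (isLeast_Icc hbeB.le)).mono ?_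
    rw [Ioc_union_Icc_eq_Ioc hbe hbeB.le]
    exact Ioo_subset_Ioc_self
  · exact (((antitoneOn_sqrt_mul_sub_mul h1ρ hbe.le).mono
      (Ioo_subset_Ioi_self.trans Ioi_subset_Ici_self)).div_const hρ0.le).congr
      (hr₂.mono (Ioo_subset_Icc_self.trans (Icc_subset_Icc hbeB.le le_rfl))).symm
end

section
/- Fix i ∈ {1,…,N} and fix the coordinates b_j for all j ≠ i of a strictly ordered bid profile. Then there is at most one t ∈ (b_{i−1}, b_{i+1}) (where b_0 := 0 and b_{N+1} := ∞) such that, at the profile with b_i replaced by t and all waiting times W_k recomputed from the perturbed profile, the first-order equilibrium condition W_i = W̃_i holds. -/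
/-! Write `σ_n = Σ_{m ≥ n} ρ_m`, `τ_n = Σ_{m ≥ n} ρ_m / β_m`, `Q_n = Σ_{j < n} ρ_j β_j W_j` and
`d_k = 1 - σ_k + β_k τ_k` for a positive profile `β` (`tailLoad`, `tailRate`, `headBidWait`,
`waitDenom`). Kleinrock's conservation law `(1 - σ_n)(W₀/(1-ρ) - Σ_{j<n} ρ_j W_j) = W₀ + Q_n τ_n`
turns the defining recursion, whose coefficients have both signs, into
`(1 - σ_k) W_k = W₀ / d_k + Q_k / β_k`, with nonnegative coefficients only. In these terms the
first-order condition at class `i` reads `C_i (W₀ τ_i / d_i² + Q_i / β_i²) = 1 - σ_i`.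

Put `β = update b i x`. For `k < i` only `d_k` depends on `x`, and `x² d_k` increases with `x`, so
induction on `k` shows that every `W_k / x²` is nonincreasing in `x`; hence so is `Q_i / x²`.
Meanwhile `τ_i` strictly decreases and `d_i` increases with `x`. The left-hand side of the
condition is therefore strictly decreasing in `x > 0`, and takes the value `1 - σ_i` at most once.
-/

/-- Class expected waiting times `W_i` in the accumulating-priority M/G/1 queue
with class loads `ρ`, strictly ordered bid profile `b` and mean residual
service time `W0`, defined by Kleinrock's recursion
`W_i = (W₀/(1−ρ) − Σ_{k<i} ρ_k(1 − b_k/b_i)W_k) / (1 − Σ_{k≥i} ρ_k(1 − b_i/b_k))`. -/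
noncomputable def classW {N : ℕ} (ρ b : Fin N → ℝ) (W0 : ℝ) : Fin N → ℝ
  | i =>
    (W0 / (1 - ∑ k, ρ k)
      - ∑ k : Fin N, if h : k < i then ρ k * (1 - b k / b i) * classW ρ b W0 k else 0)
    / (1 - ∑ k : Fin N, if i ≤ k then ρ k * (1 - b i / b k) else 0)
  termination_by i => i.val
  decreasing_by exact h

/-- The first-order-condition quantity
`W̃_i(b) = (1 − Σ_{k≥i} ρ_k(1 − b_i/b_k) − (C_i/b_i²)·Σ_{k<i} ρ_k b_k W_k) / (C_i·Σ_{k≥i} ρ_k/b_k)`. -/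
noncomputable def tildeW {N : ℕ} (ρ b C : Fin N → ℝ) (W0 : ℝ) (i : Fin N) : ℝ :=
  (1 - ∑ k : Fin N, (if i ≤ k then ρ k * (1 - b i / b k) else 0)
    - C i / (b i) ^ 2 * ∑ k : Fin N, (if k < i then ρ k * b k * classW ρ b W0 k else 0))
  / (C i * ∑ k : Fin N, (if i ≤ k then ρ k / b k else 0))

open Finset Function

namespace AccumulatingPriority

section Sums

variable {N : ℕ} {M : Type*} [AddCommMonoid M]

lemma sum_filter_val_lt_succ (f : Fin N → M) {n : ℕ} (hn : n < N) :
    ∑ j : Fin N with j.val < n + 1, f j = ∑ j : Fin N with j.val < n, f j + f ⟨n, hn⟩ := by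
  have : univ.filter (fun j : Fin N => j.val < n + 1)
      = insert ⟨n, hn⟩ (univ.filter fun j : Fin N => j.val < n) := by
    ext j
    simp only [mem_filter, mem_univ, true_and, mem_insert, Fin.ext_iff]
    omega
  rw [this, sum_insert (by simp), add_comm]

lemma sum_filter_le_val_eq_succ_bot (f : Fin N → M) {n : ℕ} (hn : n < N) :
    ∑ j : Fin N with n ≤ j.val, f j = ∑ j : Fin N with n + 1 ≤ j.val, f j + f ⟨n, hn⟩ := by
  have : univ.filter (fun j : Fin N => n ≤ j.val)
      = insert ⟨n, hn⟩ (univ.filter fun j : Fin N => n + 1 ≤ j.val) := by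
    ext j
    simp only [mem_filter, mem_univ, true_and, mem_insert, Fin.ext_iff]
    omega
  rw [this, sum_insert (by simp), add_comm]

end Sums

variable {N : ℕ} (ρ β : Fin N → ℝ) (W0 : ℝ)

noncomputable section

-- Indexed by `n : ℕ` so that the conservation law can be proved by induction up to `n = N`.
def tailLoad (n : ℕ) : ℝ := ∑ m : Fin N with n ≤ m.val, ρ m

def tailRate (n : ℕ) : ℝ := ∑ m : Fin N with n ≤ m.val, ρ m / β m

def headWait (n : ℕ) : ℝ := ∑ j : Fin N with j.val < n, ρ j * classW ρ β W0 j

def headBidWait (n : ℕ) : ℝ := ∑ j : Fin N with j.val < n, ρ j * β j * classW ρ β W0 j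

def waitDenom (k : Fin N) : ℝ := 1 - tailLoad ρ k + β k * tailRate ρ β k

def focValue (i : Fin N) : ℝ :=
  W0 * tailRate ρ β i / waitDenom ρ β i ^ 2 + headBidWait ρ β W0 i / β i ^ 2

end

lemma sum_tail_one_sub_div_eq (k : Fin N) :
    ∑ m : Fin N, (if k ≤ m then ρ m * (1 - β k / β m) else 0)
      = tailLoad ρ k - β k * tailRate ρ β k := by
  rw [tailLoad, tailRate, mul_sum, ← sum_sub_distrib, sum_filter]
  simp only [Fin.val_fin_le]
  refine sum_congr rfl fun m _ => ?_
  split_ifs <;> ring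

lemma sum_head_one_sub_div_eq (k : Fin N) :
    ∑ j : Fin N, (if _ : j < k then ρ j * (1 - β j / β k) * classW ρ β W0 j else 0)
      = headWait ρ β W0 k - headBidWait ρ β W0 k / β k := by
  rw [headWait, headBidWait, sum_div, ← sum_sub_distrib, sum_filter]
  simp only [Fin.val_fin_lt, dite_eq_ite]
  refine sum_congr rfl fun j _ => ?_
  split_ifs <;> ring

lemma classW_eq (k : Fin N) :
    classW ρ β W0 k
      = (W0 / (1 - ∑ m, ρ m) - (headWait ρ β W0 k - headBidWait ρ β W0 k / β k))
        / waitDenom ρ β k := by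
  rw [classW, sum_tail_one_sub_div_eq, sum_head_one_sub_div_eq, waitDenom]
  ring

variable {ρ β}

lemma tailLoad_lt_one (hρ : ∀ k, 0 ≤ ρ k) (hρsum : ∑ k, ρ k < 1) (n : ℕ) : tailLoad ρ n < 1 :=
  (sum_le_sum_of_subset_of_nonneg (filter_subset _ _) fun k _ _ => hρ k).trans_lt hρsum

lemma tailRate_nonneg (hρ : ∀ k, 0 ≤ ρ k) (hβ : ∀ k, 0 < β k) (n : ℕ) : 0 ≤ tailRate ρ β n :=
  sum_nonneg fun m _ => div_nonneg (hρ m) (hβ m).le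

lemma waitDenom_pos (hρ : ∀ k, 0 ≤ ρ k) (hρsum : ∑ k, ρ k < 1) (hβ : ∀ k, 0 < β k)
    (k : Fin N) : 0 < waitDenom ρ β k := by
  have := tailLoad_lt_one hρ hρsum k
  have := mul_nonneg (hβ k).le (tailRate_nonneg hρ hβ k)
  rw [waitDenom]
  linarith

theorem kleinrock_conservation (hρ : ∀ k, 0 ≤ ρ k) (hρsum : ∑ k, ρ k < 1)
    (hβ : ∀ k, 0 < β k) : ∀ n ≤ N,
    (1 - tailLoad ρ n) * (W0 / (1 - ∑ m, ρ m) - headWait ρ β W0 n)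
      = W0 + headBidWait ρ β W0 n * tailRate ρ β n
  | 0, _ => by
    simp only [tailLoad, headWait, headBidWait, zero_le, filter_true, not_lt_zero, filter_false,
      sum_empty, sub_zero, zero_mul, add_zero]
    exact mul_div_cancel₀ _ (by linarith)
  | n + 1, hn => by
    have hn : n < N := hn
    have ih := kleinrock_conservation hρ hρsum hβ n hn.le
    have hW := classW_eq ρ β W0 ⟨n, hn⟩
    rw [eq_div_iff (waitDenom_pos hρ hρsum hβ _).ne', waitDenom] at hW
    rw [tailLoad, sum_filter_le_val_eq_succ_bot _ hn, ← tailLoad,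
      tailRate, sum_filter_le_val_eq_succ_bot _ hn, ← tailRate] at ih hW
    rw [headWait, sum_filter_val_lt_succ _ hn, ← headWait,
      headBidWait, sum_filter_val_lt_succ _ hn, ← headBidWait]
    have hβρ : β ⟨n, hn⟩ * (ρ ⟨n, hn⟩ / β ⟨n, hn⟩) = ρ ⟨n, hn⟩ :=
      mul_div_cancel₀ _ (hβ _).ne'
    linear_combination ih - ρ ⟨n, hn⟩ * hW + ρ ⟨n, hn⟩ * classW ρ β W0 ⟨n, hn⟩ * hβρ

lemma one_sub_tailLoad_mul_classW (hρ : ∀ k, 0 ≤ ρ k) (hρsum : ∑ k, ρ k < 1)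
    (hβ : ∀ k, 0 < β k) (k : Fin N) :
    (1 - tailLoad ρ k) * classW ρ β W0 k = W0 / waitDenom ρ β k + headBidWait ρ β W0 k / β k := by
  have hc := kleinrock_conservation W0 hρ hρsum hβ k k.isLt.le
  have hd := (waitDenom_pos hρ hρsum hβ k).ne'
  have hβk := (hβ k).ne'
  rw [classW_eq]
  field_simp
  rw [waitDenom]
  linear_combination β k * hc

lemma tildeW_eq (C : Fin N → ℝ) (i : Fin N) :
    tildeW ρ β C W0 i
      = (waitDenom ρ β i - C i / β i ^ 2 * headBidWait ρ β W0 i) / (C i * tailRate ρ β i) := by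
  simp only [tildeW, sum_tail_one_sub_div_eq, waitDenom, headBidWait, tailRate, sum_filter, Fin.val_fin_lt,
    Fin.val_fin_le]
  ring

lemma tailRate_pos (hρ : ∀ k, 0 ≤ ρ k) (hβ : ∀ k, 0 < β k) {i : Fin N} (hρi : 0 < ρ i) {n : ℕ}
    (hn : n ≤ i) : 0 < tailRate ρ β n :=
  sum_pos' (fun m _ => div_nonneg (hρ m) (hβ m).le) ⟨i, by simpa using hn, div_pos hρi (hβ i)⟩

theorem classW_eq_tildeW_iff (hρ : ∀ k, 0 ≤ ρ k) (hρsum : ∑ k, ρ k < 1) (hβ : ∀ k, 0 < β k)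
    {C : Fin N → ℝ} {i : Fin N} (hCi : C i ≠ 0) (hρi : 0 < ρ i) :
    classW ρ β W0 i = tildeW ρ β C W0 i ↔ C i * focValue ρ β W0 i = 1 - tailLoad ρ i := by
  have hrec := one_sub_tailLoad_mul_classW W0 hρ hρsum hβ i
  have ha := (sub_pos.2 (tailLoad_lt_one hρ hρsum i)).ne'
  have hd := (waitDenom_pos hρ hρsum hβ i).ne'
  have hτ := (tailRate_pos hρ hβ hρi le_rfl).ne'
  have hβi := (hβ i).ne'
  have hd_def : waitDenom ρ β i = 1 - tailLoad ρ i + β i * tailRate ρ β i := rfl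
  rw [tildeW_eq, focValue, ← mul_right_inj' ha, hrec]
  set d := waitDenom ρ β i
  set τ := tailRate ρ β i
  set Q := headBidWait ρ β W0 i
  set σ := tailLoad ρ i
  have key : W0 / d + Q / β i - (1 - σ) * ((d - C i / β i ^ 2 * Q) / (C i * τ))
      = d / (C i * τ) * (C i * (W0 * τ / d ^ 2 + Q / β i ^ 2) - (1 - σ)) := by
    field_simp
    rw [hd_def]
    ring
  rw [← sub_eq_zero, key, mul_eq_zero, sub_eq_zero, or_iff_right]
  exact div_ne_zero hd (mul_ne_zero hCi hτ)

section Update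

variable {b : Fin N → ℝ} {i : Fin N}

lemma update_pos (hb : ∀ k, 0 < b k) (i : Fin N) {x : ℝ} (hx : 0 < x) : ∀ k, 0 < update b i x k :=
  (forall_update_iff b fun _ y => 0 < y).2 ⟨hx, fun k _ => hb k⟩

lemma mul_tailRate_update_monotoneOn (hρ : ∀ k, 0 ≤ ρ k) (hb : ∀ k, 0 < b k) (n : ℕ) :
    MonotoneOn (fun x => x * tailRate ρ (update b i x) n) (Set.Ioi 0) := by
  intro s (hs : 0 < s) t (ht : 0 < t) hst
  simp only [tailRate, mul_sum]
  refine sum_le_sum fun m _ => ?_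
  rcases eq_or_ne m i with rfl | hm
  · simp only [update_self, mul_div_cancel₀ _ hs.ne', mul_div_cancel₀ _ ht.ne', le_refl]
  · simp only [update_of_ne hm]
    exact mul_le_mul_of_nonneg_right hst (div_nonneg (hρ m) (hb m).le)

lemma tailRate_update_strictAntiOn (hρ : ∀ k, 0 ≤ ρ k) (hρi : 0 < ρ i) {n : ℕ} (hn : n ≤ i) :
    StrictAntiOn (fun x => tailRate ρ (update b i x) n) (Set.Ioi 0) := by
  intro s (hs : 0 < s) t _ hst
  refine sum_lt_sum (fun m _ => ?_) ⟨i, by simpa using hn, ?_⟩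
  · rcases eq_or_ne m i with rfl | hm
    · simp only [update_self]
      exact div_le_div_of_nonneg_left (hρ m) hs hst.le
    · simp only [update_of_ne hm, le_refl]
  · simp only [update_self]
    exact div_lt_div_of_pos_left hρi hs hst

lemma headBidWait_update_div_sq {k : Fin N} (hk : k ≤ i) (x : ℝ) :
    headBidWait ρ (update b i x) W0 k / x ^ 2
      = ∑ j : Fin N with j.val < k.val, ρ j * b j * (classW ρ (update b i x) W0 j / x ^ 2) := by
  rw [headBidWait, sum_div]
  refine sum_congr rfl fun j hj => ?_
  have hj : j < k := by simpa using hj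
  rw [update_of_ne (hj.trans_le hk).ne, mul_div_assoc]

lemma headBidWait_update_div_sq_antitoneOn (hρ : ∀ k, 0 ≤ ρ k) (hb : ∀ k, 0 < b k)
    {k : Fin N} (hk : k ≤ i)
    (h : ∀ j < k, AntitoneOn (fun x => classW ρ (update b i x) W0 j / x ^ 2) (Set.Ioi 0)) :
    AntitoneOn (fun x => headBidWait ρ (update b i x) W0 k / x ^ 2) (Set.Ioi 0) := by
  intro s hs t ht hst
  simp only [headBidWait_update_div_sq W0 hk]
  refine sum_le_sum fun j hj => ?_
  exact mul_le_mul_of_nonneg_left (h j (by simpa using hj) hs ht hst)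
    (mul_nonneg (hρ j) (hb j).le)

lemma classW_update_div_sq_eq (hρ : ∀ k, 0 ≤ ρ k) (hρsum : ∑ k, ρ k < 1) (hb : ∀ k, 0 < b k)
    {k : Fin N} (hk : k < i) {x : ℝ} (hx : 0 < x) :
    classW ρ (update b i x) W0 k / x ^ 2
      = (W0 / (x ^ 2 * waitDenom ρ (update b i x) k)
          + headBidWait ρ (update b i x) W0 k / x ^ 2 / b k) / (1 - tailLoad ρ k) := by
  have hrec := one_sub_tailLoad_mul_classW W0 hρ hρsum (update_pos hb i hx) k
  rw [update_of_ne hk.ne] at hrec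
  rw [eq_div_iff (sub_pos.2 (tailLoad_lt_one hρ hρsum k)).ne', div_mul_eq_mul_div, mul_comm, hrec]
  ring

lemma sq_mul_waitDenom_update_monotoneOn (hρ : ∀ k, 0 ≤ ρ k) (hρsum : ∑ k, ρ k < 1)
    (hb : ∀ k, 0 < b k) {k : Fin N} (hk : k ≠ i) :
    MonotoneOn (fun x => x ^ 2 * waitDenom ρ (update b i x) k) (Set.Ioi 0) := by
  intro s (hs : 0 < s) t (ht : 0 < t) hst
  have ha := sub_pos.2 (tailLoad_lt_one hρ hρsum k)
  have hτ := mul_tailRate_update_monotoneOn hρ hb (i := i) k hs ht hst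
  have hτs := mul_nonneg hs.le (tailRate_nonneg hρ (update_pos hb i hs) k)
  simp only [waitDenom, update_of_ne hk]
  calc s ^ 2 * (1 - tailLoad ρ k + b k * tailRate ρ (update b i s) k)
      = (1 - tailLoad ρ k) * s ^ 2 + b k * s * (s * tailRate ρ (update b i s) k) := by ring
    _ ≤ (1 - tailLoad ρ k) * t ^ 2 + b k * t * (t * tailRate ρ (update b i t) k) :=
      add_le_add (mul_le_mul_of_nonneg_left (pow_le_pow_left₀ hs.le hst 2) ha.le)
        (mul_le_mul (mul_le_mul_of_nonneg_left hst (hb k).le) hτ hτs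
          (mul_nonneg (hb k).le ht.le))
    _ = t ^ 2 * (1 - tailLoad ρ k + b k * tailRate ρ (update b i t) k) := by ring

theorem classW_update_div_sq_antitoneOn (hρ : ∀ k, 0 ≤ ρ k) (hρsum : ∑ k, ρ k < 1)
    (hW0 : 0 ≤ W0) (hb : ∀ k, 0 < b k) (k : Fin N) (hk : k < i) :
    AntitoneOn (fun x => classW ρ (update b i x) W0 k / x ^ 2) (Set.Ioi 0) := by
  induction k using WellFoundedLT.induction with
  | _ k ih =>
    have hQ := headBidWait_update_div_sq_antitoneOn W0 hρ hb hk.le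
      fun j hj => ih j hj (hj.trans hk)
    intro s (hs : 0 < s) t (ht : 0 < t) hst
    have hds := mul_pos (pow_pos hs 2) (waitDenom_pos hρ hρsum (update_pos hb i hs) k)
    dsimp only
    rw [classW_update_div_sq_eq W0 hρ hρsum hb hk hs, classW_update_div_sq_eq W0 hρ hρsum hb hk ht]
    refine div_le_div_of_nonneg_right (add_le_add ?_ ?_)
      (sub_pos.2 (tailLoad_lt_one hρ hρsum k)).le
    · exact div_le_div_of_nonneg_left hW0 hds
        (sq_mul_waitDenom_update_monotoneOn hρ hρsum hb hk.ne hs ht hst)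
    · exact div_le_div_of_nonneg_right (hQ hs ht hst) (hb k).le

theorem focValue_update_strictAntiOn (hρ : ∀ k, 0 ≤ ρ k) (hρsum : ∑ k, ρ k < 1) (hW0 : 0 < W0)
    (hb : ∀ k, 0 < b k) (hρi : 0 < ρ i) :
    StrictAntiOn (fun x => focValue ρ (update b i x) W0 i) (Set.Ioi 0) := by
  intro s (hs : 0 < s) t (ht : 0 < t) hst
  simp only [focValue, update_self]
  have hτ := tailRate_update_strictAntiOn (b := b) hρ hρi le_rfl hs ht hst
  have hτt := tailRate_nonneg hρ (update_pos hb i ht) i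
  have hds := waitDenom_pos hρ hρsum (update_pos hb i hs) i
  have hd : waitDenom ρ (update b i s) i ≤ waitDenom ρ (update b i t) i := by
    simp only [waitDenom, update_self]
    linarith [mul_tailRate_update_monotoneOn hρ hb (i := i) i hs ht hst.le]
  have hQ := headBidWait_update_div_sq_antitoneOn W0 hρ hb (le_refl i)
    (fun j hj => classW_update_div_sq_antitoneOn W0 hρ hρsum hW0.le hb j hj) hs ht hst.le
  have hfirst : W0 * tailRate ρ (update b i t) i / waitDenom ρ (update b i t) i ^ 2
      < W0 * tailRate ρ (update b i s) i / waitDenom ρ (update b i s) i ^ 2 :=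
    calc _ ≤ W0 * tailRate ρ (update b i t) i / waitDenom ρ (update b i s) i ^ 2 := by gcongr
      _ < _ := by gcongr
  exact add_lt_add_of_lt_of_le hfirst hQ

end Update

end AccumulatingPriority

open AccumulatingPriority

theorem first_order_condition_unique_solution_general (N : ℕ)
    (ρ b C : Fin N → ℝ) (W0 : ℝ) (i : Fin N)
    (hρ : ∀ k, 0 < ρ k) (hρsum : ∑ k, ρ k < 1) (hW0 : 0 < W0)
    (hbpos : ∀ k, 0 < b k) (hC : ∀ k, 0 < C k) :
    ∀ s t : ℝ,
      (0 < s ∧ (∀ j : Fin N, j < i → b j < s) ∧ (∀ j : Fin N, i < j → s < b j)) →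
      (0 < t ∧ (∀ j : Fin N, j < i → b j < t) ∧ (∀ j : Fin N, i < j → t < b j)) →
      classW ρ (Function.update b i s) W0 i = tildeW ρ (Function.update b i s) C W0 i →
      classW ρ (Function.update b i t) W0 i = tildeW ρ (Function.update b i t) C W0 i →
      s = t := by
  intro s t hs ht hfs hft
  have hρ' : ∀ k, 0 ≤ ρ k := fun k => (hρ k).le
  have foc {x : ℝ} (hx : 0 < x) := classW_eq_tildeW_iff W0 hρ' hρsum (update_pos hbpos i hx)
    (hC i).ne' (hρ i)
  refine (focValue_update_strictAntiOn W0 hρ' hρsum hW0 hbpos (hρ i)).injOn hs.1 ht.1 ?_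
  exact mul_left_cancel₀ (hC i).ne' (((foc hs.1).1 hfs).trans ((foc ht.1).1 hft).symm)

/-- Uniqueness of the within-interval solution to the first-order condition:
for a strictly ordered positive bid profile, there is at most one value
`t ∈ (b_{i-1}, b_{i+1})` (with `b_0 := 0`, `b_{N+1} := ∞`) such that the
perturbed profile with `b_i` replaced by `t` satisfies `W_i = W̃_i`.
Membership of `x` in the interval is expressed by `0 < x`, `b j < x` for all
`j < i`, and `x < b j` for all `j > i`. -/
theorem first_order_condition_unique_solution (N : ℕ) (hN : 1 ≤ N)
    (ρ b C : Fin N → ℝ) (W0 : ℝ) (i : Fin N)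
    (hρ : ∀ k, 0 < ρ k) (hρsum : ∑ k, ρ k < 1) (hW0 : 0 < W0)
    (hbpos : ∀ k, 0 < b k) (hbmono : StrictMono b) (hC : ∀ k, 0 < C k) :
    ∀ s t : ℝ,
      (0 < s ∧ (∀ j : Fin N, j < i → b j < s) ∧ (∀ j : Fin N, i < j → s < b j)) →
      (0 < t ∧ (∀ j : Fin N, j < i → b j < t) ∧ (∀ j : Fin N, i < j → t < b j)) →
      classW ρ (Function.update b i s) W0 i = tildeW ρ (Function.update b i s) C W0 i →
      classW ρ (Function.update b i t) W0 i = tildeW ρ (Function.update b i t) C W0 i →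
      s = t :=
  first_order_condition_unique_solution_general N ρ b C W0 i hρ hρsum hW0 hbpos hC
end
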